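/- arXiv:2211.03916 — 4 statements merged into one kernel-verified Lean document; each statement's English description precedes it below -/
import Mathlib

section
/- There exists a universal constant C_win > 0 such that the following holds. Let w ≥ 1, k, ℓ be natural numbers with w < k and w < ℓ, let A be a k×k×ℓ×ℓ array with nonnegative entries summing to 1, let Â be any k×k×ℓ×ℓ real array, and let δ > 0. Suppose that for every a,b ∈ {1,…,k} and i,j ∈ {1,…,ℓ}, A^{−w}(a,b,i,j) − δ ≤ Â(a,b,i,j) ≤ A^{+w}(a,b,i,j) + δ. Then, setting M := Proj(A) and M̂ := Proj(Â), it holds that ‖M̂ − M^{∼w}‖₁ ≤ δ·(kℓ)² + C_win/w. -/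
open Finset

/-- The 1-dimensional window `Win^{w,ℓ}(i) = {i' ∈ {1,…,ℓ} : |i' − i| ≤ w}`. -/
def Win (w l i : ℕ) : Finset ℕ :=
  (Finset.Icc 1 l).filter fun i' => i' ≤ i + w ∧ i ≤ i' + w

/-- The 4-dimensional window
`Win^{w,k,ℓ}(a,b,i,j) = Win^{w,k}(a) × Win^{w,k}(b) × Win^{w,ℓ}(i) × Win^{w,ℓ}(j)`. -/
def Win4 (w k l a b i j : ℕ) : Finset (ℕ × ℕ × ℕ × ℕ) :=
  Win w k a ×ˢ Win w k b ×ˢ Win w l i ×ˢ Win w l j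

/-- All index quadruples `{1,…,k}² × {1,…,ℓ}²`. -/
def Icc4 (k l : ℕ) : Finset (ℕ × ℕ × ℕ × ℕ) :=
  Finset.Icc 1 k ×ˢ Finset.Icc 1 k ×ˢ Finset.Icc 1 l ×ˢ Finset.Icc 1 l

/-- The normalization factor `ν^{∼w,ℓ}(i,j) = 1/|Win^{w,ℓ}(i,j)|`. -/
noncomputable def nu2 (w l i j : ℕ) : ℝ := 1 / ((Win w l i ×ˢ Win w l j).card : ℝ)

/-- The smoothed matrix `M^{∼w}`. -/
noncomputable def smooth2 (w l : ℕ) (M : ℕ → ℕ → ℝ) (i j : ℕ) : ℝ :=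
  ∑ p ∈ Win w l i ×ˢ Win w l j, nu2 w l p.1 p.2 * M p.1 p.2

/-- The normalization factor `ν^{∼w,k,ℓ}(a,b,i,j) = 1/|Win^{w,k,ℓ}(a,b,i,j)|`. -/
noncomputable def nu4 (w k l : ℕ) (q : ℕ × ℕ × ℕ × ℕ) : ℝ :=
  1 / ((Win4 w k l q.1 q.2.1 q.2.2.1 q.2.2.2).card : ℝ)

/-- The smoothed array `A^{∼w}`. -/
noncomputable def smooth4 (w k l : ℕ) (A : ℕ × ℕ × ℕ × ℕ → ℝ) (q : ℕ × ℕ × ℕ × ℕ) : ℝ :=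
  ∑ q' ∈ Win4 w k l q.1 q.2.1 q.2.2.1 q.2.2.2, nu4 w k l q' * A q'

/-- The lower-bound normalization factor `ν^{−w,k,ℓ}`: the minimum of `ν^{∼w,k,ℓ}` over the
`1`-window around the given quadruple. -/
noncomputable def nuMinus (w k l : ℕ) (q : ℕ × ℕ × ℕ × ℕ) : ℝ :=
  if h : (Win4 1 k l q.1 q.2.1 q.2.2.1 q.2.2.2).Nonempty then
    (Win4 1 k l q.1 q.2.1 q.2.2.1 q.2.2.2).inf' h (nu4 w k l)
  else 0

/-- The upper-bound normalization factor `ν^{+w,k,ℓ}`: the maximum of `ν^{∼w,k,ℓ}` over the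
`1`-window around the given quadruple. -/
noncomputable def nuPlus (w k l : ℕ) (q : ℕ × ℕ × ℕ × ℕ) : ℝ :=
  if h : (Win4 1 k l q.1 q.2.1 q.2.2.1 q.2.2.2).Nonempty then
    (Win4 1 k l q.1 q.2.1 q.2.2.1 q.2.2.2).sup' h (nu4 w k l)
  else 0

/-- The lower-bound array `A^{−w}`. -/
noncomputable def AMinus (w k l : ℕ) (A : ℕ × ℕ × ℕ × ℕ → ℝ) (q : ℕ × ℕ × ℕ × ℕ) : ℝ :=
  ∑ q' ∈ Win4 (w - 1) k l q.1 q.2.1 q.2.2.1 q.2.2.2, nuMinus w k l q' * A q'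

/-- The upper-bound array `A^{+w}`. -/
noncomputable def APlus (w k l : ℕ) (A : ℕ × ℕ × ℕ × ℕ → ℝ) (q : ℕ × ℕ × ℕ × ℕ) : ℝ :=
  ∑ q' ∈ Win4 (w + 1) k l q.1 q.2.1 q.2.2.1 q.2.2.2, nuPlus w k l q' * A q'

/-- The projection of a `k×k×ℓ×ℓ` array onto its last two coordinates. -/
noncomputable def Proj (k : ℕ) (A : ℕ × ℕ × ℕ × ℕ → ℝ) (i j : ℕ) : ℝ :=
  ∑ a ∈ Finset.Icc 1 k, ∑ b ∈ Finset.Icc 1 k, A (a, b, i, j)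

/-- Entrywise 1-norm distance between `ℓ×ℓ` matrices. -/
noncomputable def l1Mat (l : ℕ) (M N : ℕ → ℕ → ℝ) : ℝ :=
  ∑ i ∈ Finset.Icc 1 l, ∑ j ∈ Finset.Icc 1 l, |M i j - N i j|

/-- Entrywise 1-norm distance between `k×k×ℓ×ℓ` arrays. -/
noncomputable def l1Arr (k l : ℕ) (A B : ℕ × ℕ × ℕ × ℕ → ℝ) : ℝ :=
  ∑ q ∈ Icc4 k l, |A q - B q|

/-
Smoothing commutes with projection, so the left-hand side is at most the `ℓ¹` distance between `Â`
and the smoothed array `A^{∼w}`. Since `A ≥ 0`, `A^{∼w}` lies between `A^{−w}` and `A^{+w}`, so this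
distance is at most `δ (kℓ)² + ∑ A^{+w} − ∑ A^{−w}`. Exchanging the order of summation, the entry
`A(q)` enters `∑ A^{+w}` with weight `|Win^{w+1}(q)| ν^{+w}(q) ≤ |Win^{w+1}(q)| / |Win^{w−1}(q)|`
and `∑ A^{−w}` with weight `|Win^{w−1}(q)| ν^{−w}(q) ≥ |Win^{w−1}(q)| / |Win^{w+1}(q)|`. Per
coordinate, a window of radius `w + 1` has at most four more points than the one of radius `w − 1`,
which has at least `w`; so the two sums are at most `((w+4)/w)⁴` and at least `(w/(w+4))⁴`, and
these differ by at most `640 / w`.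
-/

section SumWindow

variable {α : Type*} {s : Finset α} {t : α → Finset α}

theorem sum_sum_window_eq_sum_card_nsmul {M : Type*} [AddCommMonoid M] (hts : ∀ a, t a ⊆ s)
    (hsymm : ∀ a ∈ s, ∀ b ∈ s, a ∈ t b ↔ b ∈ t a) (f : α → M) :
    ∑ a ∈ s, ∑ b ∈ t a, f b = ∑ b ∈ s, #(t b) • f b := by
  rw [sum_comm' (t' := s) (s' := t)]
  · simp only [sum_const]
  · refine fun a b => ⟨fun ⟨ha, hb⟩ => ⟨(hsymm a ha b (hts a hb)).2 hb, hts a hb⟩,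
      fun ⟨ha, hb⟩ => ⟨hts b ha, (hsymm a (hts b ha) b hb).1 ha⟩⟩

theorem sum_sum_window_div_card {K : Type*} [Field K] [CharZero K] (hts : ∀ a, t a ⊆ s)
    (hsymm : ∀ a ∈ s, ∀ b ∈ s, a ∈ t b ↔ b ∈ t a) (hself : ∀ a ∈ s, a ∈ t a) (f : α → K) :
    ∑ a ∈ s, ∑ b ∈ t a, f b / #(t b) = ∑ b ∈ s, f b := by
  rw [sum_sum_window_eq_sum_card_nsmul hts hsymm]
  refine sum_congr rfl fun b hb => ?_
  rw [nsmul_eq_mul, mul_div_cancel₀]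
  exact Nat.cast_ne_zero.2 (card_ne_zero_of_mem (hself b hb))

end SumWindow

section Win

@[simp]
theorem mem_Win {w l i x : ℕ} : x ∈ Win w l i ↔ (1 ≤ x ∧ x ≤ l) ∧ x ≤ i + w ∧ i ≤ x + w := by
  simp [Win]

theorem Win_subset_Icc (w l i : ℕ) : Win w l i ⊆ Icc 1 l := filter_subset _ _

theorem self_mem_Win {w l i : ℕ} (hi : i ∈ Icc 1 l) : i ∈ Win w l i := by
  simp only [mem_Icc] at hi; simp only [mem_Win]; omega

theorem mem_Win_comm {w l i x : ℕ} (hx : x ∈ Icc 1 l) (hi : i ∈ Icc 1 l) :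
    x ∈ Win w l i ↔ i ∈ Win w l x := by
  simp only [mem_Icc] at hx hi; simp only [mem_Win]; omega

theorem card_Win_add_two_le (w l i : ℕ) : #(Win (w + 2) l i) ≤ #(Win w l i) + 4 :=
  calc #(Win (w + 2) l i)
      ≤ #(Win w l i ∪ {i + w + 1, i + w + 2, i - (w + 1), i - (w + 2)}) :=
        card_le_card fun x hx => by
          simp only [mem_Win] at hx
          simp only [mem_union, mem_Win, mem_insert, mem_singleton]
          omega
    _ ≤ #(Win w l i) + 4 := (card_union_le _ _).trans (Nat.add_le_add_left card_le_four _)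

theorem le_card_Win {w l i : ℕ} (hw : w < l) (hi : i ∈ Icc 1 l) : w + 1 ≤ #(Win w l i) := by
  simp only [mem_Icc] at hi
  calc w + 1 = #(Icc (min i (l - w)) (min i (l - w) + w)) := by rw [Nat.card_Icc]; omega
    _ ≤ #(Win w l i) := card_le_card fun x hx => by
        simp only [mem_Icc] at hx
        simp only [mem_Win]
        omega

theorem mul_card_Win_succ_le {w l i : ℕ} (hw : 1 ≤ w) (hl : w ≤ l) (hi : i ∈ Icc 1 l) :
    w * #(Win (w + 1) l i) ≤ (w + 4) * #(Win (w - 1) l i) := by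
  obtain ⟨v, rfl⟩ : ∃ v, w = v + 1 := ⟨w - 1, by omega⟩
  have hwide := card_Win_add_two_le v l i
  have hnarrow := le_card_Win (w := v) (by omega) hi
  simp only [add_tsub_cancel_right] at hwide hnarrow ⊢
  nlinarith

end Win

section Win4

variable {w k l : ℕ}

@[simp]
theorem mem_Win4 {a b i j : ℕ} {q : ℕ × ℕ × ℕ × ℕ} :
    q ∈ Win4 w k l a b i j ↔
      q.1 ∈ Win w k a ∧ q.2.1 ∈ Win w k b ∧ q.2.2.1 ∈ Win w l i ∧ q.2.2.2 ∈ Win w l j := by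
  simp only [Win4, mem_product]

theorem mem_Icc4 {q : ℕ × ℕ × ℕ × ℕ} :
    q ∈ Icc4 k l ↔
      q.1 ∈ Icc 1 k ∧ q.2.1 ∈ Icc 1 k ∧ q.2.2.1 ∈ Icc 1 l ∧ q.2.2.2 ∈ Icc 1 l := by
  simp only [Icc4, mem_product]

theorem card_Icc4 : #(Icc4 k l) = k * (k * (l * l)) := by
  simp [Icc4, card_product]

theorem card_Win4 (a b i j : ℕ) :
    #(Win4 w k l a b i j) = #(Win w k a) * (#(Win w k b) * (#(Win w l i) * #(Win w l j))) := by
  simp only [Win4, card_product]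

theorem Win4_subset_Icc4 (a b i j : ℕ) : Win4 w k l a b i j ⊆ Icc4 k l :=
  product_subset_product (Win_subset_Icc _ _ _) <| product_subset_product (Win_subset_Icc _ _ _) <|
    product_subset_product (Win_subset_Icc _ _ _) (Win_subset_Icc _ _ _)

theorem Win4_mono {w' : ℕ} (h : w ≤ w') (a b i j : ℕ) :
    Win4 w k l a b i j ⊆ Win4 w' k l a b i j := by
  intro q hq
  simp only [mem_Win4, mem_Win] at hq ⊢
  omega

theorem self_mem_Win4 {q : ℕ × ℕ × ℕ × ℕ} (hq : q ∈ Icc4 k l) :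
    q ∈ Win4 w k l q.1 q.2.1 q.2.2.1 q.2.2.2 := by
  rw [mem_Icc4] at hq
  exact mem_Win4.2
    ⟨self_mem_Win hq.1, self_mem_Win hq.2.1, self_mem_Win hq.2.2.1, self_mem_Win hq.2.2.2⟩

theorem mem_Win4_comm {q q' : ℕ × ℕ × ℕ × ℕ} (hq : q ∈ Icc4 k l) (hq' : q' ∈ Icc4 k l) :
    q ∈ Win4 w k l q'.1 q'.2.1 q'.2.2.1 q'.2.2.2 ↔ q' ∈ Win4 w k l q.1 q.2.1 q.2.2.1 q.2.2.2 := by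
  rw [mem_Icc4] at hq hq'
  rw [mem_Win4, mem_Win4, mem_Win_comm hq.1 hq'.1, mem_Win_comm hq.2.1 hq'.2.1,
    mem_Win_comm hq.2.2.1 hq'.2.2.1, mem_Win_comm hq.2.2.2 hq'.2.2.2]

theorem card_Win4_pos {q : ℕ × ℕ × ℕ × ℕ} (hq : q ∈ Icc4 k l) :
    (0 : ℝ) < #(Win4 w k l q.1 q.2.1 q.2.2.1 q.2.2.2) := by
  exact_mod_cast card_pos.2 ⟨q, self_mem_Win4 hq⟩

theorem Win4_subset_Win4_succ_of_near (m : ℕ) {q q' : ℕ × ℕ × ℕ × ℕ}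
    (h : q' ∈ Win4 1 k l q.1 q.2.1 q.2.2.1 q.2.2.2) :
    Win4 m k l q'.1 q'.2.1 q'.2.2.1 q'.2.2.2 ⊆ Win4 (m + 1) k l q.1 q.2.1 q.2.2.1 q.2.2.2 := by
  intro x hx
  simp only [mem_Win4, mem_Win] at h hx ⊢
  omega

theorem Win4_pred_subset_Win4_of_near (hw : 1 ≤ w) {q q' : ℕ × ℕ × ℕ × ℕ}
    (h : q' ∈ Win4 1 k l q.1 q.2.1 q.2.2.1 q.2.2.2) :
    Win4 (w - 1) k l q.1 q.2.1 q.2.2.1 q.2.2.2 ⊆ Win4 w k l q'.1 q'.2.1 q'.2.2.1 q'.2.2.2 := by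
  intro x hx
  simp only [mem_Win4, mem_Win] at h hx ⊢
  omega

theorem pow_mul_card_Win4_succ_le (hw : 1 ≤ w) (hk : w ≤ k) (hl : w ≤ l)
    {q : ℕ × ℕ × ℕ × ℕ} (hq : q ∈ Icc4 k l) :
    w ^ 4 * #(Win4 (w + 1) k l q.1 q.2.1 q.2.2.1 q.2.2.2)
      ≤ (w + 4) ^ 4 * #(Win4 (w - 1) k l q.1 q.2.1 q.2.2.1 q.2.2.2) := by
  rw [mem_Icc4] at hq
  rw [card_Win4, card_Win4]
  calc _ = w * #(Win (w + 1) k q.1) * (w * #(Win (w + 1) k q.2.1) *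
        (w * #(Win (w + 1) l q.2.2.1) * (w * #(Win (w + 1) l q.2.2.2)))) := by ring
    _ ≤ (w + 4) * #(Win (w - 1) k q.1) * ((w + 4) * #(Win (w - 1) k q.2.1) *
        ((w + 4) * #(Win (w - 1) l q.2.2.1) * ((w + 4) * #(Win (w - 1) l q.2.2.2)))) :=
      Nat.mul_le_mul (mul_card_Win_succ_le hw hk hq.1) <| Nat.mul_le_mul
        (mul_card_Win_succ_le hw hk hq.2.1) <| Nat.mul_le_mul
        (mul_card_Win_succ_le hw hl hq.2.2.1) (mul_card_Win_succ_le hw hl hq.2.2.2)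
    _ = _ := by ring

end Win4

section Weights

variable {w k l : ℕ} {q : ℕ × ℕ × ℕ × ℕ}

theorem nu4_nonneg (q : ℕ × ℕ × ℕ × ℕ) : 0 ≤ nu4 w k l q := by
  unfold nu4; positivity

theorem nuMinus_le_nu4 (hq : q ∈ Icc4 k l) : nuMinus w k l q ≤ nu4 w k l q := by
  rw [nuMinus, dif_pos ⟨q, self_mem_Win4 hq⟩]
  exact inf'_le _ (self_mem_Win4 hq)

theorem nu4_le_nuPlus (hq : q ∈ Icc4 k l) : nu4 w k l q ≤ nuPlus w k l q := by
  rw [nuPlus, dif_pos ⟨q, self_mem_Win4 hq⟩]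
  exact le_sup' _ (self_mem_Win4 hq)

theorem nuPlus_le_one_div_card (hw : 1 ≤ w) (hq : q ∈ Icc4 k l) :
    nuPlus w k l q ≤ 1 / #(Win4 (w - 1) k l q.1 q.2.1 q.2.2.1 q.2.2.2) := by
  rw [nuPlus, dif_pos ⟨q, self_mem_Win4 hq⟩]
  refine sup'_le _ _ fun q' hq' => one_div_le_one_div_of_le (card_Win4_pos hq) ?_
  exact_mod_cast card_le_card (Win4_pred_subset_Win4_of_near hw hq')

theorem one_div_card_le_nuMinus (hq : q ∈ Icc4 k l) :
    1 / #(Win4 (w + 1) k l q.1 q.2.1 q.2.2.1 q.2.2.2) ≤ nuMinus w k l q := by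
  rw [nuMinus, dif_pos ⟨q, self_mem_Win4 hq⟩]
  refine le_inf' _ _ fun q' hq' =>
    one_div_le_one_div_of_le (card_Win4_pos (Win4_subset_Icc4 _ _ _ _ hq')) ?_
  exact_mod_cast card_le_card (Win4_subset_Win4_succ_of_near w hq')

theorem card_Win4_succ_mul_nuPlus_le (hw : 1 ≤ w) (hk : w ≤ k) (hl : w ≤ l) (hq : q ∈ Icc4 k l) :
    #(Win4 (w + 1) k l q.1 q.2.1 q.2.2.1 q.2.2.2) * nuPlus w k l q ≤ ((w + 4) / w) ^ 4 := by
  have hcard : (w : ℝ) ^ 4 * #(Win4 (w + 1) k l q.1 q.2.1 q.2.2.1 q.2.2.2)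
      ≤ (w + 4) ^ 4 * #(Win4 (w - 1) k l q.1 q.2.1 q.2.2.1 q.2.2.2) := by
    exact_mod_cast pow_mul_card_Win4_succ_le hw hk hl hq
  have hnarrow_pos := card_Win4_pos (w := w - 1) hq
  have hnu := nuPlus_le_one_div_card hw hq
  set wide : ℝ := ↑(#(Win4 (w + 1) k l q.1 q.2.1 q.2.2.1 q.2.2.2))
  set narrow : ℝ := ↑(#(Win4 (w - 1) k l q.1 q.2.1 q.2.2.1 q.2.2.2))
  calc wide * nuPlus w k l q ≤ wide * (1 / narrow) :=
        mul_le_mul_of_nonneg_left hnu (Nat.cast_nonneg _)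
    _ ≤ ((w + 4) / w) ^ 4 := by
      have : (0 : ℝ) < w := by exact_mod_cast hw
      rw [mul_one_div, div_pow, div_le_div_iff₀ hnarrow_pos (by positivity)]
      linarith

theorem le_card_Win4_pred_mul_nuMinus (hw : 1 ≤ w) (hk : w ≤ k) (hl : w ≤ l) (hq : q ∈ Icc4 k l) :
    ((w : ℝ) / (w + 4)) ^ 4 ≤ #(Win4 (w - 1) k l q.1 q.2.1 q.2.2.1 q.2.2.2) * nuMinus w k l q := by
  have hcard : (w : ℝ) ^ 4 * #(Win4 (w + 1) k l q.1 q.2.1 q.2.2.1 q.2.2.2)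
      ≤ (w + 4) ^ 4 * #(Win4 (w - 1) k l q.1 q.2.1 q.2.2.1 q.2.2.2) := by
    exact_mod_cast pow_mul_card_Win4_succ_le hw hk hl hq
  have hwide_pos := card_Win4_pos (w := w + 1) hq
  have hnu := one_div_card_le_nuMinus (w := w) hq
  set wide : ℝ := ↑(#(Win4 (w + 1) k l q.1 q.2.1 q.2.2.1 q.2.2.2))
  set narrow : ℝ := ↑(#(Win4 (w - 1) k l q.1 q.2.1 q.2.2.1 q.2.2.2))
  calc ((w : ℝ) / (w + 4)) ^ 4 ≤ narrow * (1 / wide) := by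
        rw [mul_one_div, div_pow, div_le_div_iff₀ (by positivity) hwide_pos]
        linarith
    _ ≤ narrow * nuMinus w k l q := mul_le_mul_of_nonneg_left hnu (Nat.cast_nonneg _)

end Weights

section Bounds

variable {w k l : ℕ} {A : ℕ × ℕ × ℕ × ℕ → ℝ}

theorem AMinus_le_smooth4 (hw : 1 ≤ w) (hA : ∀ q ∈ Icc4 k l, 0 ≤ A q) (q : ℕ × ℕ × ℕ × ℕ) :
    AMinus w k l A q ≤ smooth4 w k l A q :=
  calc AMinus w k l A q
      ≤ ∑ q' ∈ Win4 (w - 1) k l q.1 q.2.1 q.2.2.1 q.2.2.2, nu4 w k l q' * A q' :=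
        sum_le_sum fun q' hq' =>
          have hmem := Win4_subset_Icc4 _ _ _ _ hq'
          mul_le_mul_of_nonneg_right (nuMinus_le_nu4 hmem) (hA q' hmem)
    _ ≤ smooth4 w k l A q :=
        sum_le_sum_of_subset_of_nonneg (Win4_mono (by omega) _ _ _ _) fun q' hq' _ =>
          mul_nonneg (nu4_nonneg q') (hA q' (Win4_subset_Icc4 _ _ _ _ hq'))

theorem smooth4_le_APlus (hA : ∀ q ∈ Icc4 k l, 0 ≤ A q) (q : ℕ × ℕ × ℕ × ℕ) :
    smooth4 w k l A q ≤ APlus w k l A q :=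
  calc smooth4 w k l A q
      ≤ ∑ q' ∈ Win4 w k l q.1 q.2.1 q.2.2.1 q.2.2.2, nuPlus w k l q' * A q' :=
        sum_le_sum fun q' hq' =>
          have hmem := Win4_subset_Icc4 _ _ _ _ hq'
          mul_le_mul_of_nonneg_right (nu4_le_nuPlus hmem) (hA q' hmem)
    _ ≤ APlus w k l A q :=
        sum_le_sum_of_subset_of_nonneg (Win4_mono (by omega) _ _ _ _) fun q' hq' _ =>
          have hmem := Win4_subset_Icc4 _ _ _ _ hq'
          mul_nonneg ((nu4_nonneg q').trans (nu4_le_nuPlus hmem)) (hA q' hmem)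

theorem sum_APlus_le (hw : 1 ≤ w) (hk : w ≤ k) (hl : w ≤ l) (hA : ∀ q ∈ Icc4 k l, 0 ≤ A q)
    (hA1 : ∑ q ∈ Icc4 k l, A q = 1) :
    ∑ q ∈ Icc4 k l, APlus w k l A q ≤ ((w + 4) / w) ^ 4 :=
  calc ∑ q ∈ Icc4 k l, APlus w k l A q
      = ∑ q ∈ Icc4 k l, #(Win4 (w + 1) k l q.1 q.2.1 q.2.2.1 q.2.2.2) • (nuPlus w k l q * A q) :=
        sum_sum_window_eq_sum_card_nsmul (t := fun q => Win4 (w + 1) k l q.1 q.2.1 q.2.2.1 q.2.2.2)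
          (fun _ => Win4_subset_Icc4 _ _ _ _) (fun _ hq _ hq' => mem_Win4_comm hq hq') _
    _ ≤ ∑ q ∈ Icc4 k l, ((w + 4) / w) ^ 4 * A q := sum_le_sum fun q hq => by
        rw [nsmul_eq_mul, ← mul_assoc]
        exact mul_le_mul_of_nonneg_right (card_Win4_succ_mul_nuPlus_le hw hk hl hq) (hA q hq)
    _ = ((w + 4) / w) ^ 4 := by rw [← mul_sum, hA1, mul_one]

theorem le_sum_AMinus (hw : 1 ≤ w) (hk : w ≤ k) (hl : w ≤ l) (hA : ∀ q ∈ Icc4 k l, 0 ≤ A q)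
    (hA1 : ∑ q ∈ Icc4 k l, A q = 1) :
    ((w : ℝ) / (w + 4)) ^ 4 ≤ ∑ q ∈ Icc4 k l, AMinus w k l A q :=
  calc ((w : ℝ) / (w + 4)) ^ 4 = ∑ q ∈ Icc4 k l, ((w : ℝ) / (w + 4)) ^ 4 * A q := by
        rw [← mul_sum, hA1, mul_one]
    _ ≤ ∑ q ∈ Icc4 k l, #(Win4 (w - 1) k l q.1 q.2.1 q.2.2.1 q.2.2.2) • (nuMinus w k l q * A q) :=
        sum_le_sum fun q hq => by
          rw [nsmul_eq_mul, ← mul_assoc]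
          exact mul_le_mul_of_nonneg_right (le_card_Win4_pred_mul_nuMinus hw hk hl hq) (hA q hq)
    _ = ∑ q ∈ Icc4 k l, AMinus w k l A q :=
        (sum_sum_window_eq_sum_card_nsmul (t := fun q => Win4 (w - 1) k l q.1 q.2.1 q.2.2.1 q.2.2.2)
          (fun _ => Win4_subset_Icc4 _ _ _ _) (fun _ hq _ hq' => mem_Win4_comm hq hq') _).symm

end Bounds

theorem nu4_eq_nu2_div (w k l a b i j : ℕ) :
    nu4 w k l (a, b, i, j) = nu2 w l i j / #(Win w k a ×ˢ Win w k b) := by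
  simp only [nu4, nu2, card_Win4, card_product, Nat.cast_mul]
  ring

theorem smooth2_Proj (w k l : ℕ) (A : ℕ × ℕ × ℕ × ℕ → ℝ) :
    smooth2 w l (Proj k A) = Proj k (smooth4 w k l A) := by
  funext i j
  set G : ℕ × ℕ → ℝ := fun p =>
    ∑ r ∈ Win w l i ×ˢ Win w l j, nu2 w l r.1 r.2 * A (p.1, p.2, r.1, r.2) with hG
  have hsmooth4 (a b : ℕ) : smooth4 w k l A (a, b, i, j) =
      ∑ p ∈ Win w k a ×ˢ Win w k b, G p / #(Win w k p.1 ×ˢ Win w k p.2) := by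
    simp only [smooth4, Win4, hG, sum_product, sum_div, nu4_eq_nu2_div, div_mul_eq_mul_div]
  calc smooth2 w l (Proj k A) i j = ∑ p ∈ Icc 1 k ×ˢ Icc 1 k, G p := by
        simp only [smooth2, Proj, hG, mul_sum, sum_product (Icc 1 k)]
        simp only [sum_comm (s := Win w l i ×ˢ Win w l j) (t := Icc 1 k)]
    _ = Proj k (smooth4 w k l A) i j := by
        rw [← sum_sum_window_div_card (t := fun p => Win w k p.1 ×ˢ Win w k p.2), sum_product]
        · simp only [Proj, hsmooth4]
        · exact fun p => product_subset_product (Win_subset_Icc _ _ _) (Win_subset_Icc _ _ _)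
        · intro p hp p' hp'
          rw [mem_product] at hp hp'
          simp only [mem_product, mem_Win_comm hp.1 hp'.1, mem_Win_comm hp.2 hp'.2]
        · intro p hp
          rw [mem_product] at hp ⊢
          exact ⟨self_mem_Win hp.1, self_mem_Win hp.2⟩

theorem l1Mat_Proj_le_l1Arr (k l : ℕ) (B C : ℕ × ℕ × ℕ × ℕ → ℝ) :
    l1Mat l (Proj k B) (Proj k C) ≤ l1Arr k l B C :=
  calc l1Mat l (Proj k B) (Proj k C)
      ≤ ∑ i ∈ Icc 1 l, ∑ j ∈ Icc 1 l, ∑ a ∈ Icc 1 k, ∑ b ∈ Icc 1 k,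
          |B (a, b, i, j) - C (a, b, i, j)| :=
        sum_le_sum fun i _ => sum_le_sum fun j _ => by
          simp only [Proj, ← sum_sub_distrib]
          exact (abs_sum_le_sum_abs _ _).trans (sum_le_sum fun a _ => abs_sum_le_sum_abs _ _)
    _ = l1Arr k l B C := by
        simp only [l1Arr, Icc4, sum_product]
        simp only [sum_comm (s := Icc 1 k) (t := Icc 1 l)]

-- With `x = 1 + y` and denominators cleared, the difference of the two sides is a polynomial in
-- `y ≥ 0` with nonnegative coefficients.
theorem pow_sub_inv_pow_le {x : ℝ} (hx : 1 ≤ x) :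
    ((x + 4) / x) ^ 4 - (x / (x + 4)) ^ 4 ≤ 640 / x := by
  obtain ⟨y, hy, rfl⟩ : ∃ y, 0 ≤ y ∧ x = 1 + y := ⟨x - 1, by linarith, by ring⟩
  rw [div_pow, div_pow, div_sub_div _ _ (by positivity) (by positivity),
    div_le_div_iff₀ (by positivity) (by positivity), ← sub_nonneg]
  ring_nf
  positivity

theorem stmt1 :
    ∃ C : ℝ, 0 < C ∧
      ∀ (w k l : ℕ), 1 ≤ w → w < k → w < l →
        ∀ (A Ahat : ℕ × ℕ × ℕ × ℕ → ℝ) (δ : ℝ), 0 < δ →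
          (∀ q ∈ Icc4 k l, 0 ≤ A q) → (∑ q ∈ Icc4 k l, A q) = 1 →
          (∀ a ∈ Finset.Icc 1 k, ∀ b ∈ Finset.Icc 1 k,
            ∀ i ∈ Finset.Icc 1 l, ∀ j ∈ Finset.Icc 1 l,
              AMinus w k l A (a, b, i, j) - δ ≤ Ahat (a, b, i, j) ∧
                Ahat (a, b, i, j) ≤ APlus w k l A (a, b, i, j) + δ) →
          l1Mat l (Proj k Ahat) (smooth2 w l (Proj k A))
            ≤ δ * ((k : ℝ) * l) ^ 2 + C / w := by
  refine ⟨640, by norm_num, fun w k l hw hk hl A Ahat δ _ hA hA1 hAhat => ?_⟩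
  have hpointwise : ∀ q ∈ Icc4 k l,
      |Ahat q - smooth4 w k l A q| ≤ δ + (APlus w k l A q - AMinus w k l A q) := by
    rintro ⟨a, b, i, j⟩ hq
    obtain ⟨ha, hb, hi, hj⟩ := mem_Icc4.1 hq
    have := hAhat a ha b hb i hi j hj
    have := AMinus_le_smooth4 hw hA (a, b, i, j)
    have := smooth4_le_APlus (w := w) hA (a, b, i, j)
    rw [abs_sub_le_iff]
    constructor <;> linarith
  calc l1Mat l (Proj k Ahat) (smooth2 w l (Proj k A))
      ≤ l1Arr k l Ahat (smooth4 w k l A) := smooth2_Proj w k l A ▸ l1Mat_Proj_le_l1Arr k l _ _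
    _ ≤ ∑ q ∈ Icc4 k l, (δ + (APlus w k l A q - AMinus w k l A q)) := sum_le_sum hpointwise
    _ = δ * ((k : ℝ) * l) ^ 2 +
        (∑ q ∈ Icc4 k l, APlus w k l A q - ∑ q ∈ Icc4 k l, AMinus w k l A q) := by
      rw [sum_add_distrib, sum_sub_distrib, sum_const, card_Icc4, nsmul_eq_mul]
      push_cast
      ring
    _ ≤ δ * ((k : ℝ) * l) ^ 2 + (((w + 4) / w) ^ 4 - (w / (w + 4)) ^ 4) :=
      add_le_add le_rfl <|
        sub_le_sub (sum_APlus_le hw hk.le hl.le hA hA1) (le_sum_AMinus hw hk.le hl.le hA hA1)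
    _ ≤ δ * ((k : ℝ) * l) ^ 2 + 640 / w := by
      gcongr
      exact pow_sub_inv_pow_le (by exact_mod_cast hw)
end

section
/- There exists a universal constant C_spar > 0 such that the following holds. For every ε ∈ (0,1) and n, m ∈ ℕ, suppose C_spar·n/(ε²·m) ≤ p ≤ 1. Then for every directed multigraph G on n vertices with m edges, if G' is the random multigraph obtained from G by deleting each edge independently with probability 1 − p, then with probability at least 99/100 over the choice of G', both |val_G − val_{G'}| ≤ ε and |m_{G'} − p·m| ≤ ε·p·m hold, where m_{G'} denotes the number of edges of G'. -/
open Finset Real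

/-!
Each edge survives independently with probability `p`, so for a fixed cut the number of
surviving cut edges is a sum of independent Bernoulli variables; a multiplicative Chernoff bound
makes it deviate from its mean by more than `ε/4 · pm` with probability at most
`2 exp(-ε²pm/64)`, and the same holds for the total number of surviving edges. A union bound over
the `2ⁿ` cuts costs a factor `2ⁿ`, which `pm ≥ Cn/ε²` absorbs. Outside the failure event every
cut fraction of `G'` is within `ε` of that of `G`, hence so is their maximum.
-/

/-- For a directed multigraph given by an edge list `e : Fin m → V × V` and a sub-multiset
of edges `s ⊆ Fin m`, the Max-DICUT value of the subgraph: the maximum over all cuts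
`x : V → Bool` of the fraction of edges of `s` going from the `1`-side to the `0`-side. -/
noncomputable def mgval {V : Type} [Fintype V] [DecidableEq V] {m : ℕ}
    (e : Fin m → V × V) (s : Finset (Fin m)) : ℝ :=
  Finset.univ.sup' Finset.univ_nonempty
    (fun x : V → Bool =>
      ((s.filter (fun i => x (e i).1 = true ∧ x (e i).2 = false)).card : ℝ) / (s.card : ℝ))

section KeepProb

variable {ι : Type*} [Fintype ι] {p : ℝ}

noncomputable def keepWeight (p : ℝ) (s : Finset ι) : ℝ :=
  p ^ #s * (1 - p) ^ (Fintype.card ι - #s)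

noncomputable def keepProb (p : ℝ) (A : Finset (Finset ι)) : ℝ :=
  ∑ s ∈ A, keepWeight p s

lemma keepProb_univ (p : ℝ) : keepProb p (univ : Finset (Finset ι)) = 1 := by
  simp [keepProb, keepWeight, Fintype.sum_pow_mul_eq_add_pow]

lemma keepWeight_nonneg (hp₀ : 0 ≤ p) (hp₁ : p ≤ 1) (s : Finset ι) : 0 ≤ keepWeight p s := by
  have : 0 ≤ 1 - p := by linarith
  unfold keepWeight
  positivity

lemma keepProb_mono (hp₀ : 0 ≤ p) (hp₁ : p ≤ 1) {A B : Finset (Finset ι)} (h : A ⊆ B) :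
    keepProb p A ≤ keepProb p B :=
  sum_le_sum_of_subset_of_nonneg h fun s _ _ => keepWeight_nonneg hp₀ hp₁ s

lemma keepProb_union_le [DecidableEq ι] (hp₀ : 0 ≤ p) (hp₁ : p ≤ 1) (A B : Finset (Finset ι)) :
    keepProb p (A ∪ B) ≤ keepProb p A + keepProb p B := by
  rw [keepProb, keepProb, keepProb, ← sum_union_inter]
  exact le_add_of_nonneg_right (sum_nonneg fun s _ => keepWeight_nonneg hp₀ hp₁ s)

lemma keepProb_sup_le [DecidableEq ι] (hp₀ : 0 ≤ p) (hp₁ : p ≤ 1) {κ : Type*} (t : Finset κ)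
    (A : κ → Finset (Finset ι)) : keepProb p (t.sup A) ≤ ∑ k ∈ t, keepProb p (A k) :=
  apply_sup_le_sum (f := keepProb (ι := ι) p) sum_empty (keepProb_union_le hp₀ hp₁ _ _) t

lemma keepProb_filter_not (P : Finset ι → Prop) [DecidablePred P] :
    keepProb p {s | ¬ P s} = 1 - keepProb p {s | P s} := by
  rw [← keepProb_univ (ι := ι) p, keepProb, keepProb, keepProb,
    ← sum_filter_add_sum_filter_not univ P]
  ring

lemma sum_keepWeight_mul_pow_card_filter (P : ι → Prop) [DecidablePred P] (r : ℝ) :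
    ∑ s, keepWeight p s * r ^ #{i ∈ s | P i} = (1 - p + p * r) ^ #{i | P i} := by
  classical
  have hsplit : ∀ i, p * (if P i then r else 1) + (1 - p) = if P i then 1 - p + p * r else 1 := by
    intro i; split_ifs <;> ring
  have := prod_add (fun i => p * (if P i then r else 1)) (fun _ => 1 - p) univ
  simp only [hsplit, prod_ite, prod_const_one, prod_const, mul_one, powerset_univ,
    prod_mul_distrib] at this
  rw [this]
  refine sum_congr rfl fun s _ => ?_
  rw [card_univ_sdiff, keepWeight]
  ring

lemma keepProb_le_exp (hp₀ : 0 ≤ p) (hp₁ : p ≤ 1) (P : ι → Prop) [DecidablePred P] (l a : ℝ) :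
    keepProb p {s | a ≤ l * #{i ∈ s | P i}} ≤ exp (p * #{i | P i} * (exp l - 1) - a) := by
  have hw : ∀ s : Finset ι, 0 ≤ keepWeight p s := keepWeight_nonneg hp₀ hp₁
  calc keepProb p {s | a ≤ l * #{i ∈ s | P i}}
      ≤ ∑ s ∈ {s | a ≤ l * #{i ∈ s | P i}}, keepWeight p s * exp (l * #{i ∈ s | P i} - a) := by
        refine sum_le_sum fun s hs => le_mul_of_one_le_right (hw s) (one_le_exp ?_)
        linarith [(mem_filter.mp hs).2]
    _ ≤ ∑ s, keepWeight p s * exp (l * #{i ∈ s | P i} - a) :=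
        sum_le_sum_of_subset_of_nonneg (subset_univ _) fun s _ _ => by
          have := hw s
          positivity
    _ = exp (-a) * ∑ s, keepWeight p s * exp l ^ #{i ∈ s | P i} := by
        rw [mul_sum]
        refine sum_congr rfl fun s _ => ?_
        rw [← exp_nat_mul, sub_eq_add_neg, exp_add]
        ring_nf
    _ = exp (-a) * (1 - p + p * exp l) ^ #{i | P i} := by
        rw [sum_keepWeight_mul_pow_card_filter]
    _ ≤ exp (-a) * exp (p * (exp l - 1)) ^ #{i | P i} := by
        gcongr
        linarith [add_one_le_exp (p * (exp l - 1))]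
    _ = exp (p * #{i | P i} * (exp l - 1) - a) := by
        rw [← exp_nat_mul, ← exp_add]
        ring_nf

lemma keepProb_tail_le (hp₀ : 0 ≤ p) (hp₁ : p ≤ 1) (P : ι → Prop) [DecidablePred P]
    {l c μ : ℝ} (hl : |l| ≤ 1) (hμ : p * #{i | P i} ≤ μ) :
    keepProb p {s | l * (p * #{i | P i}) + c ≤ l * #{i ∈ s | P i}} ≤ exp (μ * l ^ 2 - c) := by
  refine (keepProb_le_exp hp₀ hp₁ P l _).trans (exp_le_exp.mpr ?_)
  have hexp := (abs_le.mp (abs_exp_sub_one_sub_id_le hl)).2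
  have ht : 0 ≤ p * #{i | P i} := by positivity
  nlinarith [mul_le_mul_of_nonneg_left hexp ht, mul_le_mul_of_nonneg_right hμ (sq_nonneg l)]

lemma keepProb_abs_sub_gt_le [DecidableEq ι] (hp₀ : 0 ≤ p) (hp₁ : p ≤ 1) (P : ι → Prop)
    [DecidablePred P] {δ μ : ℝ} (hδ₀ : 0 ≤ δ) (hδ₂ : δ ≤ 2) (hμ : p * #{i | P i} ≤ μ) :
    keepProb p {s | δ * μ < |(#{i ∈ s | P i} : ℝ) - p * #{i | P i}|} ≤
      2 * exp (-(δ ^ 2 * μ / 4)) := by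
  have hl : |δ / 2| ≤ 1 := by rw [abs_le]; constructor <;> linarith
  have hl' : |-(δ / 2)| ≤ 1 := by rwa [abs_neg]
  calc _ ≤ keepProb p
        (({s | δ / 2 * (p * #{i | P i}) + δ ^ 2 * μ / 2 ≤ δ / 2 * #{i ∈ s | P i}} :
            Finset (Finset ι)) ∪
          ({s | -(δ / 2) * (p * #{i | P i}) + δ ^ 2 * μ / 2 ≤ -(δ / 2) * #{i ∈ s | P i}} :
            Finset (Finset ι))) := by
        refine keepProb_mono hp₀ hp₁ fun s hs => ?_
        simp only [mem_union, mem_filter, mem_univ, true_and] at hs ⊢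
        rcases lt_abs.mp hs with h | h
        · left; nlinarith [mul_le_mul_of_nonneg_left h.le hδ₀]
        · right; nlinarith [mul_le_mul_of_nonneg_left h.le hδ₀]
    _ ≤ exp (μ * (δ / 2) ^ 2 - δ ^ 2 * μ / 2) + exp (μ * (-(δ / 2)) ^ 2 - δ ^ 2 * μ / 2) :=
        (keepProb_union_le hp₀ hp₁ _ _).trans
          (add_le_add (keepProb_tail_le hp₀ hp₁ P hl hμ) (keepProb_tail_le hp₀ hp₁ P hl' hμ))
    _ = 2 * exp (-(δ ^ 2 * μ / 4)) := by ring_nf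

lemma keepProb_exists_abs_sub_gt_le [DecidableEq ι] (hp₀ : 0 ≤ p) (hp₁ : p ≤ 1) {κ : Type*}
    [Fintype κ] (P : κ → ι → Prop) [∀ k, DecidablePred (P k)] {δ μ : ℝ} (hδ₀ : 0 ≤ δ)
    (hδ₂ : δ ≤ 2) (hμ : ∀ k, p * #{i | P k i} ≤ μ) :
    keepProb p {s | ∃ k, δ * μ < |(#{i ∈ s | P k i} : ℝ) - p * #{i | P k i}|} ≤
      Fintype.card κ * (2 * exp (-(δ ^ 2 * μ / 4))) := by
  calc _ ≤ keepProb p (univ.sup fun k =>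
        ({s | δ * μ < |(#{i ∈ s | P k i} : ℝ) - p * #{i | P k i}|} : Finset (Finset ι))) :=
        keepProb_mono hp₀ hp₁ fun s hs => by simpa using hs
    _ ≤ ∑ _k : κ, 2 * exp (-(δ ^ 2 * μ / 4)) := (keepProb_sup_le hp₀ hp₁ _ _).trans
        (sum_le_sum fun k _ => keepProb_abs_sub_gt_le hp₀ hp₁ (P k) hδ₀ hδ₂ (hμ k))
    _ = _ := by simp

lemma keepProb_abs_card_sub_gt_le [DecidableEq ι] (hp₀ : 0 ≤ p) (hp₁ : p ≤ 1) {δ μ : ℝ}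
    (hδ₀ : 0 ≤ δ) (hδ₂ : δ ≤ 2) (hμ : p * Fintype.card ι ≤ μ) :
    keepProb p {s : Finset ι | δ * μ < |(#s : ℝ) - p * Fintype.card ι|} ≤
      2 * exp (-(δ ^ 2 * μ / 4)) := by
  convert keepProb_abs_sub_gt_le hp₀ hp₁ (fun _ : ι => True) hδ₀ hδ₂ (by simpa using hμ) <;>
    simp

end KeepProb

lemma abs_sup'_sub_sup'_le {β : Type*} {s : Finset β} (hs : s.Nonempty) {f g : β → ℝ} {ε : ℝ}
    (h : ∀ b ∈ s, |f b - g b| ≤ ε) : |s.sup' hs f - s.sup' hs g| ≤ ε := by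
  have key : ∀ f g : β → ℝ, (∀ b ∈ s, |f b - g b| ≤ ε) → s.sup' hs f ≤ s.sup' hs g + ε :=
    fun f g h => sup'_le _ _ fun b hb => by linarith [(abs_le.mp (h b hb)).2, le_sup' g hb]
  refine abs_sub_le_iff.mpr ⟨by linarith [key f g h], ?_⟩
  linarith [key g f fun b hb => abs_sub_comm (f b) (g b) ▸ h b hb]

lemma abs_div_sub_div_le_of_abs_sub_le {S c t M p ε : ℝ} (hM : 0 < M) (hp : 0 < p) (hε : ε < 1)
    (ht₀ : 0 ≤ t) (htM : t ≤ M) (hS : |S - p * M| ≤ ε / 4 * (p * M))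
    (hc : |c - p * t| ≤ ε / 4 * (p * M)) : |c / S - t / M| ≤ ε := by
  have hpM : 0 < p * M := mul_pos hp hM
  have hε₀ : 0 ≤ ε := by nlinarith [abs_nonneg (S - p * M)]
  have hS₀ : p * M / 2 ≤ S := by nlinarith [(abs_le.mp hS).1]
  have hSpos : 0 < S := by linarith
  have htM' : t / M ≤ 1 := (div_le_one hM).mpr htM
  have ht' : 0 ≤ t / M := div_nonneg ht₀ hM.le
  calc |c / S - t / M| = |(c - p * t) - t / M * (S - p * M)| / S := by
        rw [← abs_of_pos hSpos, ← abs_div, abs_of_pos hSpos]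
        congr 1
        field_simp
        ring
    _ ≤ (|c - p * t| + t / M * |S - p * M|) / S := by
        gcongr
        refine (abs_sub _ _).trans_eq ?_
        rw [abs_mul, abs_of_nonneg ht']
    _ ≤ (ε / 4 * (p * M) + 1 * (ε / 4 * (p * M))) / S := by gcongr
    _ ≤ ε := by
        rw [div_le_iff₀ hSpos]
        nlinarith [mul_le_mul_of_nonneg_left hS₀ hε₀]

lemma abs_mgval_univ_sub_le {V : Type} [Fintype V] [DecidableEq V] {m : ℕ}
    (e : Fin m → V × V) (s : Finset (Fin m)) {p ε : ℝ} (hm : 0 < m) (hp : 0 < p) (hε : ε < 1)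
    (hcount : |(#s : ℝ) - p * m| ≤ ε / 4 * (p * m))
    (hcut : ∀ x : V → Bool,
      |(#{i ∈ s | x (e i).1 = true ∧ x (e i).2 = false} : ℝ) -
        p * #{i | x (e i).1 = true ∧ x (e i).2 = false}| ≤ ε / 4 * (p * m)) :
    |mgval e univ - mgval e s| ≤ ε := by
  rw [abs_sub_comm]
  refine abs_sup'_sub_sup'_le _ fun x _ => ?_
  rw [card_univ, Fintype.card_fin]
  refine abs_div_sub_div_le_of_abs_sub_le (by exact_mod_cast hm) hp hε (by positivity) ?_
    hcount (hcut x)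
  exact_mod_cast (card_filter_le _ _).trans (card_univ.trans (Fintype.card_fin m)).le

lemma two_mul_one_add_two_pow_mul_exp_le {n : ℕ} (hn : 1 ≤ n) {x : ℝ} (hx : 400 * n ≤ x) :
    2 * (1 + 2 ^ n) * exp (-x) ≤ 1 / 100 := by
  have h2n : (2 : ℝ) ^ n ≤ exp n := by
    calc (2 : ℝ) ^ n ≤ exp 1 ^ n := by gcongr; linarith [add_one_le_exp 1]
      _ = exp n := by rw [← exp_nat_mul, mul_one]
  have h399 : exp (-399) ≤ 1 / 400 := by
    rw [exp_neg, inv_eq_one_div]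
    gcongr
    linarith [add_one_le_exp 399]
  have hnx : exp (n - x) ≤ exp (-399) := by
    have : (1 : ℝ) ≤ n := by exact_mod_cast hn
    exact exp_le_exp.mpr (by linarith)
  calc 2 * (1 + 2 ^ n) * exp (-x) ≤ 4 * exp n * exp (-x) := by
        gcongr ?_ * _
        linarith [one_le_pow₀ (M₀ := ℝ) (n := n) one_le_two]
    _ = 4 * exp (n - x) := by rw [mul_assoc, ← exp_add, sub_eq_add_neg]
    _ ≤ 1 / 100 := by linarith [hnx.trans h399]

lemma keepProb_not_mgval_preserved_le {V : Type} [Fintype V] [DecidableEq V] {m : ℕ}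
    (e : Fin m → V × V) {p ε : ℝ} (hm : 0 < m) (hp₀ : 0 < p) (hp₁ : p ≤ 1) (hε₀ : 0 < ε)
    (hε₁ : ε < 1) :
    keepProb p {s | ¬ (|mgval e univ - mgval e s| ≤ ε ∧ |(#s : ℝ) - p * m| ≤ ε * (p * m))} ≤
      2 * (1 + 2 ^ Fintype.card V) * exp (-(ε ^ 2 * (p * m) / 64)) := by
  have hδ₀ : 0 ≤ ε / 4 := by positivity
  have hδ₂ : ε / 4 ≤ 2 := by linarith
  calc _ ≤ keepProb p (({s | ε / 4 * (p * m) < |(#s : ℝ) - p * Fintype.card (Fin m)|} :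
            Finset (Finset (Fin m))) ∪
          ({s | ∃ x : V → Bool, ε / 4 * (p * m) <
            |(#{i ∈ s | x (e i).1 = true ∧ x (e i).2 = false} : ℝ) -
              p * #{i | x (e i).1 = true ∧ x (e i).2 = false}|} : Finset (Finset (Fin m)))) := by
        refine keepProb_mono hp₀.le hp₁ fun s hs => ?_
        simp only [mem_filter, mem_union, mem_univ, true_and, Fintype.card_fin] at hs ⊢
        by_contra! hgood
        refine hs ⟨abs_mgval_univ_sub_le e s hm hp₀ hε₁ hgood.1 hgood.2, hgood.1.trans ?_⟩
        have : (0 : ℝ) < p * m := by positivity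
        nlinarith
    _ ≤ 2 * exp (-((ε / 4) ^ 2 * (p * m) / 4)) +
          Fintype.card (V → Bool) * (2 * exp (-((ε / 4) ^ 2 * (p * m) / 4))) := by
        refine (keepProb_union_le hp₀.le hp₁ _ _).trans (add_le_add ?_ ?_)
        · exact keepProb_abs_card_sub_gt_le hp₀.le hp₁ hδ₀ hδ₂ (by rw [Fintype.card_fin])
        refine keepProb_exists_abs_sub_gt_le hp₀.le hp₁ _ hδ₀ hδ₂ fun x => ?_
        refine mul_le_mul_of_nonneg_left ?_ hp₀.le
        exact_mod_cast (card_filter_le _ _).trans (card_univ.trans (Fintype.card_fin m)).le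
    _ = _ := by
        simp only [Fintype.card_fun, Fintype.card_bool, Nat.cast_pow, Nat.cast_ofNat]
        ring_nf

theorem stmt9 :
    ∃ C : ℝ, 0 < C ∧
      ∀ ε : ℝ, 0 < ε → ε < 1 →
      ∀ (n m : ℕ) (p : ℝ),
        C * n / (ε ^ 2 * m) ≤ p → p ≤ 1 →
        ∀ (V : Type) [Fintype V] [DecidableEq V], Fintype.card V = n →
        ∀ e : Fin m → V × V, (∀ i, (e i).1 ≠ (e i).2) →
          -- the probability, over keeping each edge independently with probability `p`,
          -- that both the Max-DICUT value and the number of surviving edges are preserved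
          (99 : ℝ) / 100 ≤
            ∑ s ∈ (Finset.univ : Finset (Finset (Fin m))).filter
                (fun s =>
                  |mgval e Finset.univ - mgval e s| ≤ ε ∧
                  |(s.card : ℝ) - p * m| ≤ ε * (p * m)),
              p ^ s.card * (1 - p) ^ (m - s.card) := by
  -- `25600 = 64 · 400`: the failure probability is `2 (1 + 2ⁿ) exp (-ε²pm/64)`.
  refine ⟨25600, by norm_num, ?_⟩
  intro ε hε₀ hε₁ n m p hp hp₁ V _ _ hcard e _
  rw [show ∀ A : Finset (Finset (Fin m)), ∑ s ∈ A, p ^ #s * (1 - p) ^ (m - #s) = keepProb p A by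
    simp [keepProb, keepWeight]]
  rcases m.eq_zero_or_pos with rfl | hm
  · rw [filter_true_of_mem fun s _ => ?_, keepProb_univ]
    · norm_num
    · simp [Subsingleton.elim s univ, hε₀.le]
  have hn : 1 ≤ n := hcard ▸ Fintype.card_pos_iff.mpr ⟨(e ⟨0, hm⟩).1⟩
  have hp₀ : 0 < p := lt_of_lt_of_le (by positivity) hp
  have hpm : 25600 * n ≤ ε ^ 2 * (p * m) := by
    rw [div_le_iff₀ (by positivity)] at hp
    linarith
  have hfail := keepProb_not_mgval_preserved_le e hm hp₀ hp₁ hε₀ hε₁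
  rw [keepProb_filter_not, hcard] at hfail
  linarith [two_mul_one_add_two_pow_mul_exp_le hn (x := ε ^ 2 * (p * m) / 64) (by linarith)]
end

section
/- Let X_1,…,X_n be random variables on a probability space with 0 ≤ X_i ≤ 1 almost surely for each i, and let X = Σ_{i=1}^n X_i. Suppose there is D ∈ ℕ such that for each i ∈ {1,…,n}, the set of indices j ∈ {1,…,n} for which X_i and X_j are not (pairwise) independent has size at most D. Then for all η > 0, Pr[|X − E[X]| ≥ η] ≤ D·E[X]/η². In particular, if the X_i are pairwise independent, then Pr[|X − E[X]| ≥ η] ≤ E[X]/η². -/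
open MeasureTheory ProbabilityTheory
open scoped Classical

/-!
Chebyshev's inequality reduces the claim to `Var[X] ≤ D • E[X]`. Expanding the variance of the
sum as `∑ i, ∑ j, cov[X i, X j]`, the covariances of independent pairs vanish, and for
`[0, 1]`-valued variables every remaining covariance satisfies
`cov[X i, X j] ≤ E[X i X j] ≤ E[X i]`, so row `i` contributes at most `D • E[X i]`.
-/

section

variable {Ω : Type*} [MeasurableSpace Ω] {μ : Measure Ω}

lemma memLp_of_ae_mem_Icc_zero_one [IsFiniteMeasure μ] {X : Ω → ℝ}
    (hX : AEStronglyMeasurable X μ) (h01 : ∀ᵐ ω ∂μ, X ω ∈ Set.Icc (0 : ℝ) 1)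
    (p : ENNReal) : MemLp X p μ :=
  MemLp.of_bound hX 1 <| h01.mono fun _ hω ↦ by
    rw [Real.norm_eq_abs, abs_le]
    exact ⟨by linarith [hω.1], hω.2⟩

lemma covariance_le_integral_of_ae_mem_Icc_zero_one [IsProbabilityMeasure μ] {X Y : Ω → ℝ}
    (hX : AEStronglyMeasurable X μ) (hY : AEStronglyMeasurable Y μ)
    (hX01 : ∀ᵐ ω ∂μ, X ω ∈ Set.Icc (0 : ℝ) 1)
    (hY01 : ∀ᵐ ω ∂μ, Y ω ∈ Set.Icc (0 : ℝ) 1) :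
    cov[X, Y; μ] ≤ μ[X] := by
  have hXL := memLp_of_ae_mem_Icc_zero_one hX hX01 2
  have hYL := memLp_of_ae_mem_Icc_zero_one hY hY01 2
  have hXY_le : μ[X * Y] ≤ μ[X] := by
    refine integral_mono_ae (hXL.integrable_mul hYL) (hXL.integrable one_le_two) ?_
    filter_upwards [hX01, hY01] with ω ⟨hX0, _⟩ ⟨_, hY1⟩
    exact mul_le_of_le_one_right hX0 hY1
  have hmean_nonneg : 0 ≤ μ[X] * μ[Y] :=
    mul_nonneg (integral_nonneg_of_ae (hX01.mono fun _ h ↦ h.1))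
      (integral_nonneg_of_ae (hY01.mono fun _ h ↦ h.1))
  rw [covariance_eq_sub hXL hYL]
  linarith

lemma measureReal_abs_sub_integral_ge_le_variance_div_sq [IsFiniteMeasure μ] {X : Ω → ℝ}
    (hX : MemLp X 2 μ) {c : ℝ} (hc : 0 < c) :
    μ.real {ω | c ≤ |X ω - μ[X]|} ≤ Var[X; μ] / c ^ 2 := by
  have h := ENNReal.toReal_mono ENNReal.ofReal_ne_top (meas_ge_le_variance_div_sq hX hc)
  rwa [ENNReal.toReal_ofReal (div_nonneg (variance_nonneg _ _) (sq_nonneg c))] at h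

variable {ι : Type*} [Fintype ι] {X : ι → Ω → ℝ}

lemma sum_covariance_le_card_dependent_mul_integral [IsProbabilityMeasure μ]
    (hX : ∀ i, AEStronglyMeasurable (X i) μ)
    (hX01 : ∀ i, ∀ᵐ ω ∂μ, X i ω ∈ Set.Icc (0 : ℝ) 1)
    (i : ι) :
    ∑ j, cov[X i, X j; μ] ≤
      (Finset.univ.filter (fun j ↦ ¬ IndepFun (X i) (X j) μ)).card * μ[X i] := by
  set dependent := Finset.univ.filter (fun j ↦ ¬ IndepFun (X i) (X j) μ)
  have hL (k : ι) : MemLp (X k) 2 μ := memLp_of_ae_mem_Icc_zero_one (hX k) (hX01 k) 2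
  calc ∑ j, cov[X i, X j; μ] = ∑ j ∈ dependent, cov[X i, X j; μ] := by
        refine (Finset.sum_subset (Finset.subset_univ _) fun j _ hj ↦ ?_).symm
        simp only [dependent, Finset.mem_filter, Finset.mem_univ, true_and, not_not] at hj
        exact hj.covariance_eq_zero (hL i) (hL j)
    _ ≤ ∑ _j ∈ dependent, μ[X i] := Finset.sum_le_sum fun j _ ↦
        covariance_le_integral_of_ae_mem_Icc_zero_one (hX i) (hX j) (hX01 i) (hX01 j)
    _ = dependent.card * μ[X i] := by rw [Finset.sum_const, nsmul_eq_mul]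

lemma variance_sum_le_mul_integral_of_card_dependent_le [IsProbabilityMeasure μ]
    (hX : ∀ i, AEStronglyMeasurable (X i) μ)
    (hX01 : ∀ i, ∀ᵐ ω ∂μ, X i ω ∈ Set.Icc (0 : ℝ) 1)
    {D : ℕ} (hD : ∀ i, (Finset.univ.filter (fun j ↦ ¬ IndepFun (X i) (X j) μ)).card ≤ D) :
    Var[fun ω ↦ ∑ i, X i ω; μ] ≤ D * μ[fun ω ↦ ∑ i, X i ω] := by
  have hL (k : ι) : MemLp (X k) 2 μ := memLp_of_ae_mem_Icc_zero_one (hX k) (hX01 k) 2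
  rw [variance_fun_sum hL, integral_finsetSum _ fun i _ ↦ (hL i).integrable one_le_two,
    Finset.mul_sum]
  refine Finset.sum_le_sum fun i _ ↦
    (sum_covariance_le_card_dependent_mul_integral hX hX01 i).trans ?_
  exact mul_le_mul_of_nonneg_right (by exact_mod_cast hD i)
    (integral_nonneg_of_ae ((hX01 i).mono fun _ h ↦ h.1))

end

theorem stmt10 {Ω : Type} [MeasurableSpace Ω] (μ : Measure Ω)
    [IsProbabilityMeasure μ] (n : ℕ) (X : Fin n → Ω → ℝ)
    (hmeas : ∀ i, Measurable (X i))
    (hbound : ∀ i, ∀ᵐ ω ∂μ, 0 ≤ X i ω ∧ X i ω ≤ 1) :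
    (∀ D : ℕ,
      (∀ i, (Finset.univ.filter (fun j => ¬ IndepFun (X i) (X j) μ)).card ≤ D) →
      ∀ η : ℝ, 0 < η →
        (μ {ω | η ≤ |(∑ i, X i ω) - ∫ ω', (∑ i, X i ω') ∂μ|}).toReal ≤
          (D : ℝ) * (∫ ω', (∑ i, X i ω') ∂μ) / η ^ 2) ∧
    ((∀ i j, i ≠ j → IndepFun (X i) (X j) μ) →
      ∀ η : ℝ, 0 < η →
        (μ {ω | η ≤ |(∑ i, X i ω) - ∫ ω', (∑ i, X i ω') ∂μ|}).toReal ≤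
          (∫ ω', (∑ i, X i ω') ∂μ) / η ^ 2) := by
  have hX i : AEStronglyMeasurable (X i) μ := (hmeas i).aestronglyMeasurable
  have hsumL : MemLp (fun ω ↦ ∑ i, X i ω) 2 μ :=
    memLp_finsetSum _ fun i _ ↦ memLp_of_ae_mem_Icc_zero_one (hX i) (hbound i) 2
  have dependency_bound (D : ℕ)
      (hD : ∀ i, (Finset.univ.filter (fun j => ¬ IndepFun (X i) (X j) μ)).card ≤ D)
      (η : ℝ) (hη : 0 < η) :
      (μ {ω | η ≤ |(∑ i, X i ω) - ∫ ω', (∑ i, X i ω') ∂μ|}).toReal ≤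
        (D : ℝ) * (∫ ω', (∑ i, X i ω') ∂μ) / η ^ 2 :=
    (measureReal_abs_sub_integral_ge_le_variance_div_sq hsumL hη).trans <|
      div_le_div_of_nonneg_right
        (variance_sum_le_mul_integral_of_card_dependent_le hX hbound hD) (sq_nonneg η)
  refine ⟨dependency_bound, fun hindep η hη ↦ ?_⟩
  have hD i : (Finset.univ.filter (fun j => ¬ IndepFun (X i) (X j) μ)).card ≤ 1 := by
    refine (Finset.card_le_card fun j hj ↦ Finset.mem_singleton.mpr ?_).trans
      (Finset.card_singleton i).le
    by_contra hji
    exact (Finset.mem_filter.mp hj).2 (hindep i j (Ne.symm hji))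
  simpa using dependency_bound 1 hD η hη
end

section
/- Let V be a finite set with a distinguished element ⋆ ∈ V, and let L be a weighted directed graph on V. Let p ∈ V with p ≠ ⋆ and Adj_L(p,⋆) = 0, and let α ≥ 0 and 0 ≤ β ≤ deg-out_L(p). Then there exists a weighted directed graph L' on V such that: (1) for all q ∈ V with q ∉ {p, ⋆}, deg-out_{L'}(q) = deg-out_L(q) and deg-in_{L'}(q) = deg-in_L(q); (2) deg-out_{L'}(p) = deg-out_L(p) − β and deg-in_{L'}(p) = deg-in_L(p) + α; (3) m_{L'} = m_L + α; and (4) Σ_{u,v ∈ V} |Adj_{L'}(u,v) − Adj_L(u,v)| = α + 2β. The same holds with the roles of out-degrees and in-degrees swapped (assuming instead Adj_L(⋆,p) = 0 and 0 ≤ β ≤ deg-in_L(p)). -/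
open Finset

/-- A weighted directed graph on a finite vertex set `V`: a nonnegative adjacency matrix
with zero diagonal. -/
structure WGraphOn (V : Type) [Fintype V] where
  Adj : V → V → ℝ
  nonneg : ∀ u v, 0 ≤ Adj u v
  diag : ∀ v, Adj v v = 0

variable {V : Type} [Fintype V]

/-- The total weight `m_G`. -/
noncomputable def mTot (G : WGraphOn V) : ℝ := ∑ u, ∑ v, G.Adj u v

/-- The out-degree `deg-out_G(v)`. -/
noncomputable def degOut (G : WGraphOn V) (v : V) : ℝ := ∑ u, G.Adj v u

/-- The in-degree `deg-in_G(v)`. -/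
noncomputable def degIn (G : WGraphOn V) (v : V) : ℝ := ∑ u, G.Adj u v

/-- The total degree `deg_G(v)`. -/
noncomputable def deg (G : WGraphOn V) (v : V) : ℝ := degOut G v + degIn G v

/-- The bias `bias_G(v) = (deg-out_G(v) − deg-in_G(v))/deg_G(v)` (junk value `0` at
isolated vertices, where all incident weights vanish anyway). -/
noncomputable def bias (G : WGraphOn V) (v : V) : ℝ := (degOut G v - degIn G v) / deg G v

/-- The (normalized) value `val_G(x)` of a cut `x`. -/
noncomputable def cutVal (G : WGraphOn V) (x : V → Bool) : ℝ :=
  (1 / mTot G) * ∑ u, ∑ v, G.Adj u v * (if x u then 1 else 0) * (if x v then 0 else 1)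

/-- The Max-DICUT value `val_G`, the maximum of `val_G(x)` over all cuts. -/
noncomputable def gval [DecidableEq V] (G : WGraphOn V) : ℝ :=
  Finset.univ.sup' Finset.univ_nonempty (cutVal G)

/-- The index `ind^t(x)` of `x` with respect to the threshold vector `(t 0, …, t ℓ)`:
the unique `i ∈ {1,…,ℓ}` with `t (i−1) ≤ x < t i`, and `ℓ` when `x = t ℓ`. -/
noncomputable def tInd (t : ℕ → ℝ) (l : ℕ) (x : ℝ) : ℕ :=
  if x = t l then l
  else ∑ i ∈ (Finset.Icc 1 l).filter (fun i => t (i - 1) ≤ x ∧ x < t i), i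

/-- The snapshot `Snap_{G,t}`. -/
noncomputable def Snap (G : WGraphOn V) (t : ℕ → ℝ) (l : ℕ) (i j : ℕ) : ℝ :=
  (1 / mTot G) * ∑ u, ∑ v,
    (if tInd t l (bias G u) = i ∧ tInd t l (bias G v) = j then G.Adj u v else 0)

/-! A fraction `c = β / deg-out(p)` of every edge leaving `p` is redirected to leave `star`
instead, and an edge `star → p` of weight `α` is added. Only the rows of `p` and `star` change,
and the column sums change only at `p`, by `α`; the change costs `β` in row `p` and `β + α` in
row `star`. `Adj(p, star) = 0` is what keeps the diagonal zero. Reversing all edges gives the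
in-degree version. -/

section RowShift

variable [DecidableEq V]

def rowShift (A : V → V → ℝ) (a b : V) (r s : V → ℝ) : V → V → ℝ :=
  fun u v => A u v + (if u = a then r v else 0) - (if u = b then s v else 0)

variable (A : V → V → ℝ) {a b : V} (r s : V → ℝ)

lemma sum_rowShift_of_ne {q : V} (hqa : q ≠ a) (hqb : q ≠ b) :
    ∑ v, rowShift A a b r s q v = ∑ v, A q v := by
  simp [rowShift, hqa, hqb]

lemma sum_rowShift_right (hab : a ≠ b) :
    ∑ v, rowShift A a b r s b v = ∑ v, A b v - ∑ v, s v := by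
  simp [rowShift, hab.symm, Finset.sum_sub_distrib]

lemma sum_rowShift_col (v : V) :
    ∑ u, rowShift A a b r s u v = ∑ u, A u v + r v - s v := by
  simp [rowShift, Finset.sum_add_distrib, Finset.sum_sub_distrib]

lemma sum_sum_rowShift :
    ∑ u, ∑ v, rowShift A a b r s u v = ∑ u, ∑ v, A u v + ∑ v, r v - ∑ v, s v := by
  rw [Finset.sum_comm]
  simp only [sum_rowShift_col, Finset.sum_add_distrib, Finset.sum_sub_distrib]
  rw [Finset.sum_comm]

lemma sum_sum_abs_rowShift_sub (hab : a ≠ b) :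
    ∑ u, ∑ v, |rowShift A a b r s u v - A u v| = ∑ v, |r v| + ∑ v, |s v| := by
  have hrow : ∀ u v, |rowShift A a b r s u v - A u v| =
      (if u = a then |r v| else 0) + (if u = b then |s v| else 0) := by
    intro u v
    by_cases hua : u = a
    · subst hua; simp [rowShift, hab]
    by_cases hub : u = b
    · subst hub; simp [rowShift, hua]
    · simp [rowShift, hua, hub]
  simp [hrow, Finset.sum_add_distrib]

end RowShift

lemma degOut_nonneg (G : WGraphOn V) (v : V) : 0 ≤ degOut G v :=
  Finset.sum_nonneg fun u _ => G.nonneg v u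

lemma exists_reroute_out (star p : V) (L : WGraphOn V) (hp : p ≠ star) (α β : ℝ)
    (hα : 0 ≤ α) (hβ : 0 ≤ β) (hpstar : L.Adj p star = 0) (hβp : β ≤ degOut L p) :
    ∃ L' : WGraphOn V,
      (∀ q, q ≠ p → q ≠ star →
        degOut L' q = degOut L q ∧ degIn L' q = degIn L q) ∧
      degOut L' p = degOut L p - β ∧
      degIn L' p = degIn L p + α ∧
      mTot L' = mTot L + α ∧
      (∑ u, ∑ v, |L'.Adj u v - L.Adj u v|) = α + 2 * β := by
  classical
  set c := β / degOut L p
  have hc0 : 0 ≤ c := div_nonneg hβ (degOut_nonneg L p)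
  have hc1 : c ≤ 1 := div_le_one_of_le₀ hβp (degOut_nonneg L p)
  set s : V → ℝ := fun v => c * L.Adj p v
  set r : V → ℝ := fun v => s v + if v = p then α else 0
  have hs0 : ∀ v, 0 ≤ s v := fun v => mul_nonneg hc0 (L.nonneg p v)
  have hr0 : ∀ v, 0 ≤ r v := fun v => add_nonneg (hs0 v) (by split_ifs <;> simp [hα])
  have hs : ∑ v, s v = β := by
    rw [← Finset.mul_sum]
    exact div_mul_cancel_of_imp fun h => le_antisymm (h ▸ hβp) hβ
  have hr : ∑ v, r v = β + α := by simp [r, Finset.sum_add_distrib, hs]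
  have hrs : ∀ v, r v - s v = if v = p then α else 0 := fun v => add_sub_cancel_left _ _
  refine ⟨⟨rowShift L.Adj star p r s, fun u v => ?_, fun v => ?_⟩,
    fun q hqp hqs => ⟨sum_rowShift_of_ne _ _ _ hqs hqp, ?_⟩, ?_, ?_, ?_, ?_⟩
  · by_cases hus : u = star
    · subst hus; simpa [rowShift, hp.symm] using add_nonneg (L.nonneg u v) (hr0 v)
    by_cases hup : u = p
    · subst hup
      have : 0 ≤ (1 - c) * L.Adj u v := mul_nonneg (by linarith) (L.nonneg u v)
      simp only [rowShift, hus, if_false, if_true, s]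
      linarith
    · simp [rowShift, hus, hup, L.nonneg u v]
  · by_cases hvs : v = star
    · subst hvs; simp [rowShift, r, s, hp.symm, hpstar, L.diag]
    · by_cases hvp : v = p <;> simp [rowShift, hvs, hvp, hp, s, L.diag]
  · simp only [degIn, sum_rowShift_col, add_sub_assoc, hrs, hqp, if_false, add_zero]
  · rw [degOut, sum_rowShift_right _ _ _ hp.symm, hs, degOut]
  · rw [degIn, sum_rowShift_col, add_sub_assoc, hrs, if_pos rfl, degIn]
  · rw [mTot, sum_sum_rowShift, hr, hs, mTot]
    ring
  · rw [sum_sum_abs_rowShift_sub _ _ _ hp.symm]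
    simp only [abs_of_nonneg (hr0 _), abs_of_nonneg (hs0 _), hr, hs]
    ring

def WGraphOn.transpose (G : WGraphOn V) : WGraphOn V :=
  ⟨fun u v => G.Adj v u, fun u v => G.nonneg v u, G.diag⟩

lemma mTot_transpose (G : WGraphOn V) : mTot G.transpose = mTot G :=
  Finset.sum_comm

theorem stmt17 (V : Type) [Fintype V] (star p : V) (L : WGraphOn V)
    (hp : p ≠ star) (α β : ℝ) (hα : 0 ≤ α) (hβ : 0 ≤ β) :
    (L.Adj p star = 0 → β ≤ degOut L p →
      ∃ L' : WGraphOn V,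
        (∀ q, q ≠ p → q ≠ star →
          degOut L' q = degOut L q ∧ degIn L' q = degIn L q) ∧
        degOut L' p = degOut L p - β ∧
        degIn L' p = degIn L p + α ∧
        mTot L' = mTot L + α ∧
        (∑ u, ∑ v, |L'.Adj u v - L.Adj u v|) = α + 2 * β) ∧
    (L.Adj star p = 0 → β ≤ degIn L p →
      ∃ L' : WGraphOn V,
        (∀ q, q ≠ p → q ≠ star →
          degOut L' q = degOut L q ∧ degIn L' q = degIn L q) ∧
        degIn L' p = degIn L p - β ∧
        degOut L' p = degOut L p + α ∧
        mTot L' = mTot L + α ∧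
        (∑ u, ∑ v, |L'.Adj u v - L.Adj u v|) = α + 2 * β) := by
  refine ⟨exists_reroute_out star p L hp α β hα hβ, fun hstarp hβp => ?_⟩
  obtain ⟨L', hq, hout, hin, hm, habs⟩ :=
    exists_reroute_out star p L.transpose hp α β hα hβ hstarp hβp
  refine ⟨L'.transpose, fun q hqp hqs => (hq q hqp hqs).symm, hout, hin, ?_, ?_⟩
  · rw [mTot_transpose, hm, mTot_transpose]
  · rw [Finset.sum_comm]
    exact habs
end
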